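/- If the distribution F is absolutely continuous with respect to Lebesgue measure, then for every R₀ < R one has the uniform Riemann–Lebesgue property: lim_{θ→±∞} sup_{0≤r≤R₀} |g(r + iθ)| = 0. -/

import Mathlib

/-!
For fixed `s`, `θ ↦ g(s + iθ)` is a Fourier transform of the Lebesgue-integrable function
`f(x) e^{sx}`, `f = dF/dx`, so it tends to `0` by the Riemann–Lebesgue lemma. Moreover
`|g(r + iθ) - g(s + iθ)| ≤ ∫ |e^{rx} - e^{sx}| dF` is a modulus of continuity independent of `θ`,
and it tends to `0` as `r → s` by dominated convergence on `[0, a]`, where `e^{ax}` is integrable.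
So the functions `r ↦ g(r + iθ)` are equicontinuous on the compact interval `[0, a]`, and pointwise
convergence to `0` upgrades to uniform convergence there.
-/

open MeasureTheory Filter Complex Set Asymptotics ProbabilityTheory

noncomputable section

/-- The residue of `f` at `c`: the limit, as `r → 0⁺`, of `(2πi)⁻¹ ∮_{|z-c|=r} f`. -/
def residue (f : ℂ → ℂ) (c : ℂ) : ℂ :=
  limUnder (nhdsWithin 0 (Set.Ioi (0 : ℝ)))
    fun r => (2 * Real.pi * Complex.I)⁻¹ * (∮ z in C(c, r), f z)

/-- `n`-fold convolution power of a measure on `ℝ`. -/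
def convPow (F : Measure ℝ) : ℕ → Measure ℝ
  | 0 => Measure.dirac 0
  | n + 1 => Measure.map (fun p : ℝ × ℝ => p.1 + p.2) ((convPow F n).prod F)

/-- Renewal function `U(x) = ∑ₙ F^{*n}((-∞, x])`. -/
def renewalFn (F : Measure ℝ) (x : ℝ) : ℝ :=
  (∑' n : ℕ, convPow F n (Set.Iic x)).toReal

/-- Complex moment generating function `g(z) = ∫ e^{zx} dF(x)`. -/
def cmgf (F : Measure ℝ) (z : ℂ) : ℂ :=
  ∫ x, Complex.exp (z * x) ∂F

/-- `F` is lattice with mesh `1`: supported on `ℕ` but not on `hℕ` for any integer `h > 1`. -/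
def LatticeMeshOne (F : Measure ℝ) : Prop :=
  F {x : ℝ | ∀ n : ℕ, x ≠ n} = 0 ∧
    ∀ h : ℕ, 2 ≤ h → 0 < F {x : ℝ | ∀ n : ℕ, x ≠ ((h * n : ℕ) : ℝ)}

/-- Condition (A) at level `R₀`:
`limsup_{θ→±∞} sup_{0 ≤ r ≤ R₀} |1/(1 - g(r+iθ))| < ∞`, phrased as an eventual
uniform lower bound on `‖1 - g(r+iθ)‖`. -/
def CondA (g : ℂ → ℂ) (R₀ : ℝ) : Prop :=
  ∃ C > (0:ℝ), ∀ᶠ θ : ℝ in (Filter.atTop ⊔ Filter.atBot),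
    ∀ r ∈ Set.Icc (0:ℝ) R₀, 1 ≤ C * ‖1 - g ((r : ℂ) + (θ : ℂ) * Complex.I)‖

open scoped Topology

theorem equicontinuousWithinAt_of_continuity_modulus {ι β α : Type*} [TopologicalSpace β]
    [PseudoMetricSpace α] {S : Set β} {x₀ : β} (b : β → ℝ) (b_lim : Tendsto b (𝓝[S] x₀) (𝓝 0))
    (F : ι → β → α) (H : ∀ᶠ x in 𝓝[S] x₀, ∀ i, dist (F i x₀) (F i x) ≤ b x) :
    EquicontinuousWithinAt F S x₀ := by
  intro U hU
  obtain ⟨ε, hε, hεU⟩ := Metric.mem_uniformity_dist.mp hU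
  filter_upwards [b_lim (Iio_mem_nhds hε), H] with x hx₁ hx₂ i
  exact hεU ((hx₂ i).trans_lt hx₁)

theorem EquicontinuousOn.tendstoUniformlyOn_of_tendsto {ι X α : Type*} [TopologicalSpace X]
    [UniformSpace α] {F : ι → X → α} {f : X → α} {K : Set X} {l : Filter ι}
    (hK : IsCompact K) (hF : EquicontinuousOn F K) (h : ∀ x ∈ K, Tendsto (F · x) l (𝓝 (f x))) :
    TendstoUniformlyOn F f l K := by
  have key := (EquicontinuousOn.tendsto_uniformOnFun_iff_pi' (𝔖 := {K}) (by simpa using hK)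
    (by simpa using hF) l f).2 (by
      rw [sUnion_singleton, tendsto_pi_nhds]
      exact fun x => h x x.2)
  rw [UniformOnFun.tendsto_iff_tendstoUniformlyOn] at key
  exact key K rfl

theorem tendsto_integral_exp_mul_I_smul_cocompact {E : Type*} [NormedAddCommGroup E]
    [NormedSpace ℂ E] {μ : Measure ℝ} [SigmaFinite μ] (hac : μ ≪ volume) (f : ℝ → E) :
    Tendsto (fun θ : ℝ => ∫ x, cexp (θ * x * I) • f x ∂μ) (cocompact ℝ) (𝓝 0) := by
  -- `cexp (θ * x * I) = 𝐞 (-(x * (θ * -(2π)⁻¹)))` and `dμ = (dμ/dx) dx`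
  have hc : -(2 * Real.pi)⁻¹ ≠ 0 := by simp [Real.pi_ne_zero]
  have key := (Real.tendsto_integral_exp_smul_cocompact
    (fun x => (μ.rnDeriv volume x).toReal • f x)).comp
      (Homeomorph.mulRight₀ _ hc).map_cocompact.le
  refine key.congr fun θ => ?_
  rw [← integral_rnDeriv_smul hac]
  refine integral_congr_ae (Eventually.of_forall fun x => ?_)
  simp only [Homeomorph.coe_mulRight₀, Circle.smul_def,
    Real.fourierChar_apply, smul_comm _ (μ.rnDeriv volume x).toReal]
  congr 3
  push_cast
  field_simp

theorem Real.exp_mul_le_one_add_exp_mul {r a : ℝ} (hr : r ∈ Icc 0 a) (x : ℝ) :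
    Real.exp (r * x) ≤ 1 + Real.exp (a * x) := by
  rcases le_or_gt x 0 with hx | hx
  · linarith [Real.exp_le_one_iff.mpr (mul_nonpos_of_nonneg_of_nonpos hr.1 hx),
      Real.exp_pos (a * x)]
  · linarith [Real.exp_le_exp.mpr (mul_le_mul_of_nonneg_right hr.2 hx.le)]

theorem norm_cexp_add_mul_I_mul_sub (r s θ x : ℝ) :
    ‖cexp ((r + θ * I) * x) - cexp ((s + θ * I) * x)‖ = |Real.exp (r * x) - Real.exp (s * x)| := by
  have split (t : ℝ) : cexp ((t + θ * I) * x) = Real.exp (t * x) * cexp ((θ * x : ℝ) * I) := by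
    rw [ofReal_exp, ← Complex.exp_add]
    push_cast
    ring_nf
  rw [split, split, ← sub_mul, norm_mul, norm_exp_ofReal_mul_I, mul_one, ← ofReal_sub, norm_real,
    Real.norm_eq_abs]

section VerticalStrip

variable {μ : Measure ℝ} [IsFiniteMeasure μ] {a : ℝ}

theorem integrable_cexp_mul_of_re_mem_Icc (ha : Integrable (fun x => Real.exp (a * x)) μ)
    {z : ℂ} (hz : z.re ∈ Icc 0 a) : Integrable (fun x : ℝ => cexp (z * x)) μ := by
  refine ((integrable_const 1).add ha).mono' (by fun_prop) (Eventually.of_forall fun x => ?_)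
  simpa [Complex.norm_exp] using Real.exp_mul_le_one_add_exp_mul hz x

theorem tendsto_integral_abs_exp_mul_sub (ha : Integrable (fun x => Real.exp (a * x)) μ)
    {s : ℝ} (hs : s ∈ Icc 0 a) :
    Tendsto (fun r => ∫ x, |Real.exp (s * x) - Real.exp (r * x)| ∂μ) (𝓝[Icc 0 a] s) (𝓝 0) := by
  have hcont : ContinuousOn (fun r => ∫ x, |Real.exp (s * x) - Real.exp (r * x)| ∂μ) (Icc 0 a) := by
    refine continuousOn_of_dominated (bound := fun x => 2 * (1 + Real.exp (a * x)))
      (fun r _ => by fun_prop) (fun r hr => Eventually.of_forall fun x => ?_)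
      (((integrable_const 1).add ha).const_mul 2)
      (Eventually.of_forall fun x => by fun_prop)
    rw [Real.norm_eq_abs, abs_abs]
    refine (abs_sub _ _).trans ?_
    rw [abs_of_pos (Real.exp_pos _), abs_of_pos (Real.exp_pos _)]
    linarith [Real.exp_mul_le_one_add_exp_mul hs x, Real.exp_mul_le_one_add_exp_mul hr x]
  simpa using (hcont s hs).tendsto

theorem equicontinuousOn_cmgf_add_mul_I (ha : Integrable (fun x => Real.exp (a * x)) μ) :
    EquicontinuousOn (fun (θ r : ℝ) => cmgf μ (r + θ * I)) (Icc 0 a) := by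
  intro s hs
  refine equicontinuousWithinAt_of_continuity_modulus _ (tendsto_integral_abs_exp_mul_sub ha hs) _
    (eventually_mem_nhdsWithin.mono fun r hr θ => ?_)
  rw [dist_eq_norm, cmgf, cmgf, ← integral_sub (integrable_cexp_mul_of_re_mem_Icc ha (by simpa))
    (integrable_cexp_mul_of_re_mem_Icc ha (by simpa))]
  refine (norm_integral_le_integral_norm _).trans_eq ?_
  simp only [norm_cexp_add_mul_I_mul_sub]

end VerticalStrip

theorem tendsto_cmgf_add_mul_I_cocompact {μ : Measure ℝ} [SigmaFinite μ] (hac : μ ≪ volume)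
    (s : ℝ) : Tendsto (fun θ : ℝ => cmgf μ (s + θ * I)) (cocompact ℝ) (𝓝 0) := by
  refine (tendsto_integral_exp_mul_I_smul_cocompact hac fun x : ℝ => cexp (s * x)).congr
    fun θ => integral_congr_ae (Eventually.of_forall fun x => ?_)
  rw [smul_eq_mul, ← Complex.exp_add]
  ring_nf

theorem uniform_riemann_lebesgue_general
    (F : Measure ℝ) [IsProbabilityMeasure F]
    (hac : F ≪ (volume : Measure ℝ))
    (R₀ : ℝ) (hR₀ltR : ∃ r > R₀, Integrable (fun x => Real.exp (r * x)) F) :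
    ∀ ε > (0:ℝ), ∀ᶠ θ : ℝ in (Filter.atTop ⊔ Filter.atBot),
      ∀ r ∈ Set.Icc (0:ℝ) R₀, ‖cmgf F ((r : ℂ) + (θ : ℂ) * Complex.I)‖ < ε := by
  obtain ⟨a, haR₀, ha⟩ := hR₀ltR
  have huniform : TendstoUniformlyOn (fun (θ r : ℝ) => cmgf F (r + θ * I)) 0 (cocompact ℝ)
      (Icc 0 a) :=
    (equicontinuousOn_cmgf_add_mul_I ha).tendstoUniformlyOn_of_tendsto isCompact_Icc
      fun s _ => tendsto_cmgf_add_mul_I_cocompact hac s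
  rw [cocompact_eq_atBot_atTop, sup_comm] at huniform
  intro ε hε
  filter_upwards [Metric.tendstoUniformlyOn_iff.mp huniform ε hε] with θ hθ r hr
  simpa using hθ r (Icc_subset_Icc_right haR₀.le hr)

/-- **Uniform Riemann–Lebesgue property.**
If `F` is absolutely continuous with respect to Lebesgue measure, then for every `R₀ < R`,
`lim_{θ→±∞} sup_{0 ≤ r ≤ R₀} |g(r + iθ)| = 0`, i.e. `g(r+iθ) → 0` as `θ → ±∞`,
uniformly in `r ∈ [0, R₀]`. -/
theorem uniform_riemann_lebesgue
    (F : Measure ℝ) [IsProbabilityMeasure F]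
    (hsupp : F (Set.Iio 0) = 0)
    (hac : F ≪ (volume : Measure ℝ))
    (R₀ : ℝ) (hR₀ltR : ∃ r > R₀, Integrable (fun x => Real.exp (r * x)) F) :
    ∀ ε > (0:ℝ), ∀ᶠ θ : ℝ in (Filter.atTop ⊔ Filter.atBot),
      ∀ r ∈ Set.Icc (0:ℝ) R₀, ‖cmgf F ((r : ℂ) + (θ : ℂ) * Complex.I)‖ < ε :=
  uniform_riemann_lebesgue_general F hac R₀ hR₀ltR

end
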